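/- arXiv:1211.3475 — 5 statements merged into one kernel-verified Lean document; each statement's English description precedes it below -/
import Mathlib

section
/- Let g : ℝ → ℝ be continuous with lim_{t→0} g(t)/t = 0 and lim_{|t|→∞} g(t)/t³ = +∞. For m > 0 set f(t) = g(t) + m·t. Then there exists Λ > 0 such that f(t)·t ≥ -Λ·t⁴ for all t ∈ ℝ. -/
open MeasureTheory Filter Topology

/- Outside a punctured neighbourhood of the origin and a compact set, `f t * t ≥ 0`: near `0`
because `g t / t > -m`, near infinity because `g t / t ^ 3 ≥ 0`. On what remains, a compact set
bounded away from `0`, the continuous function `f t * t` is bounded below by some `-C`, and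
`-C ≥ -(C / δ ^ 4) * t ^ 4` once `|t| ≥ δ`. -/

theorem exists_neg_mul_norm_pow_le_of_eventually_nonneg {E : Type*} [SeminormedAddCommGroup E]
    {φ : E → ℝ} (hφ : Continuous φ) (h_nhds : ∀ᶠ x in 𝓝 0, 0 ≤ φ x)
    (h_cocompact : ∀ᶠ x in cocompact E, 0 ≤ φ x) (n : ℕ) :
    ∃ Λ > (0 : ℝ), ∀ x, -Λ * ‖x‖ ^ n ≤ φ x := by
  obtain ⟨δ, hδ, h_ball⟩ := Metric.eventually_nhds_iff_ball.mp h_nhds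
  obtain ⟨K, hK, h_compl⟩ := mem_cocompact.mp h_cocompact
  obtain ⟨C, hC⟩ := hK.exists_bound_of_continuousOn hφ.continuousOn
  set c := max C 0
  refine ⟨c / δ ^ n + 1, by positivity, fun x => ?_⟩
  by_cases hx : 0 ≤ φ x
  · have : 0 ≤ (c / δ ^ n + 1) * ‖x‖ ^ n := by positivity
    linarith
  have hxK : x ∈ K := by_contra fun h => hx (h_compl h)
  have hδx : δ ≤ ‖x‖ := by_contra fun h => hx (h_ball x (mem_ball_zero_iff.mpr (not_le.mp h)))
  calc -(c / δ ^ n + 1) * ‖x‖ ^ n ≤ -(c / δ ^ n * δ ^ n) := by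
        rw [neg_mul, neg_le_neg_iff]
        gcongr
        linarith
    _ = -c := by field_simp
    _ ≤ -C := neg_le_neg (le_max_left C 0)
    _ ≤ φ x := neg_le_of_abs_le (hC x hxK)

/-- there is `Λ > 0` with `f(t) t ≥ -Λ t⁴`, where `f(t) = g(t) + m t`. -/
theorem stmt_1 (g : ℝ → ℝ) (hg : Continuous g)
    (hg0 : Tendsto (fun t => g t / t) (𝓝[≠] (0 : ℝ)) (𝓝 0))
    (hginf : Tendsto (fun t => g t / t ^ 3) (cocompact ℝ) atTop)
    (m : ℝ) (hm : 0 < m)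
    (f : ℝ → ℝ) (hf : ∀ t, f t = g t + m * t) :
    ∃ Λ > (0 : ℝ), ∀ t : ℝ, f t * t ≥ -Λ * t ^ 4 := by
  have hf_mul_eq_div_self : ∀ t, f t * t = (g t / t + m) * t ^ 2 := fun t => by
    rcases eq_or_ne t 0 with rfl | ht
    · simp
    · rw [hf]; field_simp
  have hf_mul_eq_div_cube : ∀ t, f t * t = g t / t ^ 3 * t ^ 4 + m * t ^ 2 := fun t => by
    rcases eq_or_ne t 0 with rfl | ht
    · simp
    · rw [hf]; field_simp
  have h_punctured : ∀ᶠ t in 𝓝[≠] (0 : ℝ), 0 ≤ f t * t := by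
    filter_upwards [hg0.eventually (lt_mem_nhds (neg_lt_zero.mpr hm))] with t ht
    rw [hf_mul_eq_div_self]
    exact mul_nonneg (by linarith) (sq_nonneg t)
  have h_nhds : ∀ᶠ t in 𝓝 (0 : ℝ), 0 ≤ f t * t := by
    rw [← nhdsNE_sup_pure, eventually_sup]
    exact ⟨h_punctured, by simp⟩
  have h_cocompact : ∀ᶠ t in cocompact ℝ, 0 ≤ f t * t := by
    filter_upwards [hginf.eventually (eventually_ge_atTop 0)] with t ht
    rw [hf_mul_eq_div_cube]
    positivity
  have hφ : Continuous fun t => f t * t := by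
    simp only [hf]
    fun_prop
  obtain ⟨Λ, hΛ, hbound⟩ := exists_neg_mul_norm_pow_le_of_eventually_nonneg hφ h_nhds h_cocompact 4
  refine ⟨Λ, hΛ, fun t => ?_⟩
  simpa [Real.norm_eq_abs, Even.pow_abs ⟨2, rfl⟩ t] using hbound t
end

section
/- Suppose F : ℝ → ℝ is continuous, there exists Λ̃ > 0 with F(t) ≥ -Λ̃·t⁴ for all t, and F(t)/t⁴ → +∞ as |t| → ∞. Let Y be a finite-dimensional subspace of H¹(ℝ³) and (uₙ) ⊂ Y with ‖uₙ‖ → ∞. Then ∫_{ℝ³} F(uₙ) dx / ‖uₙ‖⁴ → +∞. -/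
open MeasureTheory Filter Topology

instance : Fact ((1 : ENNReal) ≤ 4) := ⟨by norm_num⟩

/-!
Fix `M ≥ 0`. Since `F t / t⁴ → ∞` and `F ≥ -Λ t⁴`, there is a cutoff `R` with
`F t ≥ M' t⁴ - (M' + Λ) min(|t|, R)⁴` for all `t`. Integrating,
`∫ F(u) ≥ M' ‖u‖⁴ - (M' + Λ) T_R(u)⁴` where `T_ε(v) = ‖min(|v|, ε)‖₄`. Each `T_ε` is
`1`-Lipschitz on `L⁴`, and `T_ε(v)` decreases to `0` as `ε ↓ 0`; by Dini's theorem the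
convergence is uniform on the compact unit ball of the finite-dimensional space `Y`. Since
`T_{cε}(c v) = c T_ε(v)`, this gives `T_R(u) ≤ ‖u‖ / 2` for all `u ∈ Y` of large norm, hence
`∫ F(u) ≥ M ‖u‖⁴` for a suitable `M'`.
-/

open scoped ENNReal

section

variable {X E : Type*} [MeasurableSpace X] {μ : Measure X} {p : ℝ≥0∞} [NormedAddCommGroup E]

theorem lpNorm_congr_ae {f g : X → E} (h : f =ᵐ[μ] g) : lpNorm f p μ = lpNorm g p μ := by
  by_cases hf : AEStronglyMeasurable f μ
  · rw [← toReal_eLpNorm hf, ← toReal_eLpNorm (hf.congr h), eLpNorm_congr_ae h]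
  · rw [lpNorm_of_not_aestronglyMeasurable hf,
      lpNorm_of_not_aestronglyMeasurable fun hg => hf (hg.congr h.symm)]

theorem MeasureTheory.Lp.norm_eq_lpNorm (v : Lp E p μ) : ‖v‖ = lpNorm v p μ := by
  rw [Lp.norm_def, toReal_eLpNorm (Lp.aestronglyMeasurable v)]

theorem lpNorm_pow_eq_integral_norm_pow {f : X → E} (hf : AEStronglyMeasurable f μ) {n : ℕ}
    (hn : n ≠ 0) : lpNorm f n μ ^ n = ∫ x, ‖f x‖ ^ n ∂μ := by
  rw [lpNorm_eq_integral_norm_rpow_toReal (by simpa using hn) (by simp) hf]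
  simp only [ENNReal.toReal_natCast, Real.rpow_natCast]
  exact Real.rpow_inv_natCast_pow (integral_nonneg fun x => by positivity) hn

theorem memLp_min_abs_const {f : X → ℝ} (hf : MemLp f p μ) {ε : ℝ} (hε : 0 ≤ ε) :
    MemLp (fun x => min |f x| ε) p μ := by
  refine hf.of_le ((continuous_abs.min continuous_const).comp_aestronglyMeasurable
    hf.aestronglyMeasurable) (.of_forall fun x => ?_)
  rw [Real.norm_of_nonneg (le_min (abs_nonneg _) hε), Real.norm_eq_abs]
  exact min_le_left _ _

end

section

variable {X : Type*} [MeasurableSpace X] {μ : Measure X} {p : ℝ≥0∞}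

noncomputable def truncLpNorm (p : ℝ≥0∞) (μ : Measure X) (ε : ℝ) (v : Lp ℝ p μ) : ℝ :=
  lpNorm (fun x => min |v x| ε) p μ

theorem lipschitzWith_truncLpNorm [Fact (1 ≤ p)] {ε : ℝ} (hε : 0 ≤ ε) :
    LipschitzWith 1 (truncLpNorm p μ ε) := by
  refine .of_le_add fun v w => ?_
  have hdiff : lpNorm (fun x => min |v x| ε - min |w x| ε) p μ ≤ ‖v - w‖ := by
    rw [Lp.norm_eq_lpNorm, lpNorm_congr_ae (Lp.coeFn_sub v w),
      ← lpNorm_fun_abs (Lp.aestronglyMeasurable v |>.sub (Lp.aestronglyMeasurable w))]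
    refine lpNorm_mono_real ((Lp.memLp v).sub (Lp.memLp w)).abs fun x => ?_
    calc ‖min |v x| ε - min |w x| ε‖ ≤ |(|v x| - |w x|)| := by
          simpa using abs_min_sub_min_le_max |v x| ε |w x| ε
      _ ≤ |v x - w x| := abs_abs_sub_abs_le_abs_sub _ _
  calc truncLpNorm p μ ε v
      ≤ truncLpNorm p μ ε w + lpNorm (fun x => min |v x| ε - min |w x| ε) p μ :=
        lpNorm_le_lpNorm_add_lpNorm_sub' (memLp_min_abs_const (Lp.memLp w) hε) Fact.out
    _ ≤ truncLpNorm p μ ε w + dist v w := by rw [dist_eq_norm]; gcongr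

theorem truncLpNorm_mono {ε ε' : ℝ} (hε : 0 ≤ ε) (hεε' : ε ≤ ε') (v : Lp ℝ p μ) :
    truncLpNorm p μ ε v ≤ truncLpNorm p μ ε' v :=
  lpNorm_mono_real (memLp_min_abs_const (Lp.memLp v) (hε.trans hεε')) fun x => by
    rw [Real.norm_of_nonneg (le_min (abs_nonneg _) hε)]
    exact min_le_min le_rfl hεε'

theorem truncLpNorm_smul {c : ℝ} (hc : 0 ≤ c) (ε : ℝ) (v : Lp ℝ p μ) :
    truncLpNorm p μ (c * ε) (c • v) = c * truncLpNorm p μ ε v := by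
  have h : (fun x => min |(c • v) x| (c * ε)) =ᵐ[μ] c • fun x => min |v x| ε := by
    filter_upwards [Lp.coeFn_smul c v] with x hx
    simp [hx, abs_mul, abs_of_nonneg hc, mul_min_of_nonneg _ _ hc]
  rw [truncLpNorm, lpNorm_congr_ae h, lpNorm_const_smul, coe_nnnorm, Real.norm_of_nonneg hc,
    truncLpNorm]

theorem tendsto_truncLpNorm_nhdsGE_zero (hp₀ : p ≠ 0) (hp : p ≠ ∞) (v : Lp ℝ p μ) :
    Tendsto (fun ε => truncLpNorm p μ ε v) (𝓝[≥] 0) (𝓝 0) := by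
  have hq : 0 < p.toReal := ENNReal.toReal_pos hp₀ hp
  have hcont (ε : ℝ) : Continuous fun t : ℝ => min |t| ε := by fun_prop
  have hint : Tendsto (fun ε : ℝ => ∫ x, ‖min |v x| ε‖ ^ p.toReal ∂μ) (𝓝[≥] 0) (𝓝 0) := by
    have := tendsto_integral_filter_of_dominated_convergence (l := 𝓝[≥] (0 : ℝ))
      (fun x => ‖v x‖ ^ p.toReal)
      (.of_forall fun ε => (((hcont ε).comp_aestronglyMeasurable
        (Lp.aestronglyMeasurable v)).norm.aemeasurable.pow_const _).aestronglyMeasurable)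
      (eventually_nhdsWithin_of_forall fun ε (hε : 0 ≤ ε) => .of_forall fun x => by
        rw [Real.norm_of_nonneg (by positivity), Real.norm_of_nonneg (le_min (abs_nonneg _) hε),
          Real.norm_eq_abs]
        gcongr
        exact min_le_left _ _)
      ((Lp.memLp v).integrable_norm_rpow hp₀ hp)
      (.of_forall fun x => ((((continuous_const.min continuous_id).norm.rpow_const
        fun _ => Or.inr hq.le).tendsto 0).mono_left nhdsWithin_le_nhds :
          Tendsto (fun ε : ℝ => ‖min |v x| ε‖ ^ p.toReal) _ _))
    simpa [Real.zero_rpow hq.ne'] using this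
  have := hint.rpow_const (Or.inr (inv_nonneg.2 hq.le))
  rw [Real.zero_rpow (inv_ne_zero hq.ne')] at this
  refine this.congr fun ε => ?_
  rw [truncLpNorm, lpNorm_eq_integral_norm_rpow_toReal hp₀ hp
    ((hcont ε).comp_aestronglyMeasurable (Lp.aestronglyMeasurable v))]

end

section

variable {X : Type*} [MeasurableSpace X] {μ : Measure X} {p : ℝ≥0∞} [Fact (1 ≤ p)]

theorem exists_truncLpNorm_le_of_norm_le_one (hp : p ≠ ∞) (Y : Submodule ℝ (Lp ℝ p μ))
    [FiniteDimensional ℝ Y] {δ : ℝ} (hδ : 0 < δ) :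
    ∃ ε > 0, ∀ v ∈ Y, ‖v‖ ≤ 1 → truncLpNorm p μ ε v ≤ δ := by
  have hp₀ : p ≠ 0 := (zero_lt_one.trans_le Fact.out).ne'
  have hε (k : ℕ) : (0 : ℝ) ≤ 1 / (k + 1) := by positivity
  have hanti : Antitone fun k : ℕ => (1 : ℝ) / (k + 1) := fun k l hkl =>
    one_div_le_one_div_of_le (by positivity) (by gcongr)
  have hcont (k : ℕ) : Continuous fun v : Y => truncLpNorm p μ (1 / (k + 1)) v :=
    (lipschitzWith_truncLpNorm (hε k)).continuous.comp continuous_subtype_val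
  have hunif : TendstoUniformlyOn (fun (k : ℕ) (v : Y) => truncLpNorm p μ (1 / (k + 1)) v) 0
      atTop (Metric.closedBall 0 1) := by
    refine Antitone.tendstoUniformlyOn_of_forall_tendsto (isCompact_closedBall 0 1)
      (fun k => (hcont k).continuousOn)
      (fun v _ k l hkl => truncLpNorm_mono (hε l) (hanti hkl) (v : Lp ℝ p μ))
      continuousOn_const fun v _ => ?_
    exact (tendsto_truncLpNorm_nhdsGE_zero hp₀ hp (v : Lp ℝ p μ)).comp
      (tendsto_nhdsWithin_iff.2 ⟨tendsto_one_div_add_atTop_nhds_zero_nat, .of_forall hε⟩)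
  obtain ⟨k, hk⟩ := (Metric.tendstoUniformlyOn_iff.1 hunif δ hδ).exists
  refine ⟨1 / (k + 1), by positivity, fun v hv hv1 => ?_⟩
  have := hk ⟨v, hv⟩ (by simpa using hv1)
  rw [Pi.zero_apply, dist_comm, Real.dist_0_eq_abs, abs_lt] at this
  exact this.2.le

theorem exists_truncLpNorm_le_mul_norm (hp : p ≠ ∞) (Y : Submodule ℝ (Lp ℝ p μ))
    [FiniteDimensional ℝ Y] {δ : ℝ} (hδ : 0 < δ) {R : ℝ} (hR : 0 ≤ R) :
    ∃ C > 0, ∀ v ∈ Y, C ≤ ‖v‖ → truncLpNorm p μ R v ≤ δ * ‖v‖ := by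
  obtain ⟨ε, hε, hsmall⟩ := exists_truncLpNorm_le_of_norm_le_one hp Y hδ
  refine ⟨max (R / ε) 1, by positivity, fun v hv hC => ?_⟩
  set c := ‖v‖
  have hc : 0 < c := lt_of_lt_of_le (by positivity) hC
  have hRc : R / c ≤ ε := by
    rw [div_le_iff₀ hc, mul_comm, ← div_le_iff₀ hε]
    exact le_of_max_le_left hC
  calc truncLpNorm p μ R v = truncLpNorm p μ (c * (R / c)) (c • c⁻¹ • v) := by
        rw [mul_div_cancel₀ _ hc.ne', smul_inv_smul₀ hc.ne']
    _ = c * truncLpNorm p μ (R / c) (c⁻¹ • v) := truncLpNorm_smul hc.le _ _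
    _ ≤ c * truncLpNorm p μ ε (c⁻¹ • v) := by
        gcongr
        exact truncLpNorm_mono (by positivity) hRc _
    _ ≤ c * δ := by
        gcongr
        refine hsmall _ (Y.smul_mem _ hv) ?_
        rw [norm_smul, norm_inv, norm_norm, inv_mul_cancel₀ hc.ne']
    _ = δ * c := mul_comm _ _

end

theorem exists_sub_mul_min_pow_le {F : ℝ → ℝ} {Λ M : ℝ} (hlow : ∀ t, -Λ * t ^ 4 ≤ F t)
    (hsup : Tendsto (fun t => F t / t ^ 4) (cocompact ℝ) atTop) (hMΛ : 0 ≤ M + Λ) :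
    ∃ R ≥ 0, ∀ t, M * t ^ 4 - (M + Λ) * min |t| R ^ 4 ≤ F t := by
  obtain ⟨R, hR⟩ : ∃ R, ∀ t : ℝ, R ≤ |t| → M ≤ F t / t ^ 4 := by
    have h := hsup.eventually_ge_atTop M
    rw [← Metric.cobounded_eq_cocompact, ← comap_norm_atTop, eventually_comap,
      eventually_atTop] at h
    obtain ⟨R, hR⟩ := h
    exact ⟨R, fun t ht => hR _ ht t rfl⟩
  refine ⟨max R 1, by positivity, fun t => ?_⟩
  rcases le_total (max R 1) |t| with ht | ht
  · have ht4 : 0 < t ^ 4 := by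
      rw [← Even.pow_abs (by decide)]
      exact pow_pos ((by positivity : (0 : ℝ) < max R 1).trans_le ht) 4
    have := (le_div_iff₀ ht4).1 (hR t (le_of_max_le_left ht))
    rw [min_eq_right ht]
    nlinarith [pow_nonneg (zero_le_one.trans (le_max_right R 1)) 4]
  · rw [min_eq_left ht, Even.pow_abs (by decide)]
    linarith [hlow t]

theorem sub_mul_truncLpNorm_pow_le_integral {X : Type*} [MeasurableSpace X] {μ : Measure X}
    {F : ℝ → ℝ} {a b R : ℝ} (hR : 0 ≤ R) (hF : ∀ t, a * t ^ 4 - b * min |t| R ^ 4 ≤ F t)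
    (u : Lp ℝ 4 μ) (hint : Integrable (fun x => F (u x)) μ) :
    a * ‖u‖ ^ 4 - b * truncLpNorm 4 μ R u ^ 4 ≤ ∫ x, F (u x) ∂μ := by
  have hnorm (t : ℝ) : ‖t‖ ^ 4 = t ^ 4 := by rw [Real.norm_eq_abs, Even.pow_abs (by decide)]
  have hmin (t : ℝ) : ‖min |t| R‖ ^ 4 = min |t| R ^ 4 := by
    rw [Real.norm_of_nonneg (le_min (abs_nonneg _) hR)]
  have hu := Lp.memLp u
  have htrunc := memLp_min_abs_const hu hR
  have hu4 : ∫ x, u x ^ 4 ∂μ = ‖u‖ ^ 4 := by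
    simpa only [hnorm, Lp.norm_eq_lpNorm, Nat.cast_ofNat] using
      (lpNorm_pow_eq_integral_norm_pow hu.aestronglyMeasurable (n := 4) (by norm_num)).symm
  have htrunc4 : ∫ x, min |u x| R ^ 4 ∂μ = truncLpNorm 4 μ R u ^ 4 := by
    simpa only [hmin, truncLpNorm, Nat.cast_ofNat] using
      (lpNorm_pow_eq_integral_norm_pow htrunc.aestronglyMeasurable (n := 4) (by norm_num)).symm
  have hint4 : Integrable (fun x => u x ^ 4) μ := by
    simpa only [hnorm, Nat.cast_ofNat] using hu.integrable_norm_pow (p := 4) (by norm_num)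
  have hinttrunc : Integrable (fun x => min |u x| R ^ 4) μ := by
    simpa only [hmin, Nat.cast_ofNat] using htrunc.integrable_norm_pow (p := 4) (by norm_num)
  calc a * ‖u‖ ^ 4 - b * truncLpNorm 4 μ R u ^ 4
      = ∫ x, (a * u x ^ 4 - b * min |u x| R ^ 4) ∂μ := by
        rw [integral_sub (hint4.const_mul a) (hinttrunc.const_mul b), integral_const_mul,
          integral_const_mul, hu4, htrunc4]
    _ ≤ ∫ x, F (u x) ∂μ :=
        integral_mono ((hint4.const_mul a).sub (hinttrunc.const_mul b)) hint fun x => hF (u x)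

/-- `Y ⊂ H¹(ℝ³)` is modelled as a finite-dimensional subspace of `L⁴(ℝ³)`: by the Sobolev
embedding and the equivalence of norms on `Y`, the `H¹` and `L⁴` norms are comparable there. -/
theorem stmt_4_general (F : ℝ → ℝ)
    (Λ : ℝ) (hΛ : 0 < Λ) (hlow : ∀ t : ℝ, F t ≥ -Λ * t ^ 4)
    (hsup : Tendsto (fun t => F t / t ^ 4) (cocompact ℝ) atTop)
    (Y : Submodule ℝ (Lp ℝ 4 (volume : Measure (EuclideanSpace ℝ (Fin 3)))))
    [FiniteDimensional ℝ Y]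
    (u : ℕ → Y)
    (hu : Tendsto (fun n => ‖u n‖) atTop atTop)
    (hint : ∀ n, Integrable
      (fun x => F ((u n : Lp ℝ 4 (volume : Measure (EuclideanSpace ℝ (Fin 3)))) x)) volume) :
    Tendsto (fun n =>
      (∫ x, F ((u n : Lp ℝ 4 (volume : Measure (EuclideanSpace ℝ (Fin 3)))) x)) / ‖u n‖ ^ 4)
      atTop atTop := by
  refine (atTop_basis' 0).tendsto_right_iff.2 fun M hM => ?_
  -- With `M' = 2M + Λ` and `T_R(u) ≤ ‖u‖ / 2`: `M' - (M' + Λ) / 16 ≥ M`.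
  obtain ⟨R, hR, hF⟩ := exists_sub_mul_min_pow_le (M := 2 * M + Λ) hlow hsup (by linarith)
  obtain ⟨C, hC, hsmall⟩ :=
    exists_truncLpNorm_le_mul_norm (by norm_num) Y (δ := 1 / 2) (by norm_num) hR
  filter_upwards [hu.eventually_ge_atTop C] with n hn
  set c := ‖u n‖
  have hc : 0 < c := hC.trans_le hn
  have hcoe : ‖(u n).1‖ = c := rfl
  have htrunc : truncLpNorm 4 volume R (u n).1 ^ 4 ≤ (c / 2) ^ 4 :=
    pow_le_pow_left₀ lpNorm_nonneg ((hsmall _ (u n).2 hn).trans_eq (by rw [hcoe]; ring)) 4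
  have hlower := sub_mul_truncLpNorm_pow_le_integral hR hF _ (hint n)
  rw [hcoe] at hlower
  rw [Set.mem_Ici, le_div_iff₀ (by positivity)]
  nlinarith [mul_le_mul_of_nonneg_left htrunc (by linarith : 0 ≤ 2 * M + Λ + Λ),
    mul_nonneg hM (pow_nonneg hc.le 4), mul_nonneg hΛ.le (pow_nonneg hc.le 4)]

/-- if `F ≥ -Λ t⁴` and `F(t)/t⁴ → +∞` as `|t| → ∞`, `Y` is a
finite-dimensional subspace of `H¹(ℝ³)` (modelled, via the Sobolev embedding and the
equivalence of norms on finite-dimensional spaces, as a finite-dimensional subspace of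
`L⁴(ℝ³)`), and `‖uₙ‖ → ∞` with `uₙ ∈ Y`, then `∫ F(uₙ) / ‖uₙ‖⁴ → +∞`. -/
theorem stmt_4 (F : ℝ → ℝ) (hF : Continuous F)
    (Λ : ℝ) (hΛ : 0 < Λ) (hlow : ∀ t : ℝ, F t ≥ -Λ * t ^ 4)
    (hsup : Tendsto (fun t => F t / t ^ 4) (cocompact ℝ) atTop)
    (Y : Submodule ℝ (Lp ℝ 4 (volume : Measure (EuclideanSpace ℝ (Fin 3)))))
    [FiniteDimensional ℝ Y]
    (u : ℕ → Y)
    (hu : Tendsto (fun n => ‖u n‖) atTop atTop)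
    (hint : ∀ n, Integrable
      (fun x => F ((u n : Lp ℝ 4 (volume : Measure (EuclideanSpace ℝ (Fin 3)))) x)) volume) :
    Tendsto (fun n =>
      (∫ x, F ((u n : Lp ℝ 4 (volume : Measure (EuclideanSpace ℝ (Fin 3)))) x)) / ‖u n‖ ^ 4)
      atTop atTop :=
  stmt_4_general F Λ hΛ hlow hsup Y u hu hint
end

section
/- Let g : ℝ → ℝ be continuous with G(t) = ∫₀ᵗ g, and suppose t ↦ g(t)/|t|³ is nondecreasing on (0, ∞) and on (−∞, 0). Then for 𝒢(t) := g(t)t − 4G(t), one has 𝒢(st) ≤ 𝒢(t) for all s ∈ [0,1] and t ∈ ℝ (i.e., Jeanjean's condition (Je) holds with θ = 1). -/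
open Set

/-!
Fix `t > 0` and put `c = g t / t ^ n`. Monotonicity gives `g τ ≤ c τ ^ n` on `(0, t]`, i.e. `g`
lies below the pure power `c τ ^ n`, for which `g(τ) τ - (n + 1) G(τ)` is constant. Comparing
`g` with that power on `[s t, t]` yields the inequality. Negative `t` reduce to positive ones
through the reflection `τ ↦ -g (-τ)`, which preserves the hypotheses and the quantity.
-/

/-- The paper's `𝒢(t) = g(t) t - 4 G(t)` is the case `n = 3`. -/
noncomputable def jeanjeanFn (g : ℝ → ℝ) (n : ℕ) (t : ℝ) : ℝ :=
  g t * t - (n + 1) * ∫ τ in (0 : ℝ)..t, g τ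

section

variable {g : ℝ → ℝ} {n : ℕ}

lemma le_div_pow_mul_pow_of_monotoneOn
    (hmono : MonotoneOn (fun t => g t / |t| ^ n) (Ioi 0)) {τ t : ℝ} (hτ : 0 < τ) (hτt : τ ≤ t) :
    g τ ≤ g t / |t| ^ n * τ ^ n := by
  have hle : g τ / τ ^ n ≤ g t / |t| ^ n := by
    simpa only [abs_of_pos hτ] using hmono hτ (hτ.trans_le hτt) hτt
  rwa [div_le_iff₀ (pow_pos hτ n)] at hle

lemma jeanjeanFn_mul_le_of_pos (hg : Continuous g)
    (hmono : MonotoneOn (fun t => g t / |t| ^ n) (Ioi 0)) {s t : ℝ} (hs : s ∈ Icc 0 1)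
    (ht : 0 < t) : jeanjeanFn g n (s * t) ≤ jeanjeanFn g n t := by
  set c := g t / |t| ^ n
  have hst₀ : 0 ≤ s * t := mul_nonneg hs.1 ht.le
  have hst : s * t ≤ t := mul_le_of_le_one_left ht.le hs.2
  have hint : (n + 1) * ∫ τ in s * t..t, g τ ≤ c * (t ^ (n + 1) - (s * t) ^ (n + 1)) := by
    calc (n + 1) * ∫ τ in s * t..t, g τ
        ≤ (n + 1) * ∫ τ in s * t..t, c * τ ^ n := by
          gcongr
          refine intervalIntegral.integral_mono_on_of_le_Ioo hst (hg.intervalIntegrable _ _)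
            ((continuous_const.mul (continuous_pow n)).intervalIntegrable _ _) fun τ hτ => ?_
          exact le_div_pow_mul_pow_of_monotoneOn hmono (hst₀.trans_lt hτ.1) hτ.2.le
      _ = c * (t ^ (n + 1) - (s * t) ^ (n + 1)) := by
          rw [intervalIntegral.integral_const_mul, integral_pow]
          field_simp
  have hleft : g (s * t) * (s * t) ≤ c * (s * t) ^ (n + 1) := by
    rcases hst₀.eq_or_lt with h | h
    · simp [← h]
    · rw [pow_succ, ← mul_assoc c]
      exact mul_le_mul_of_nonneg_right (le_div_pow_mul_pow_of_monotoneOn hmono h hst) h.le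
  have hright : g t * t = c * t ^ (n + 1) := by
    simp only [c, pow_succ, abs_of_pos ht]
    field_simp
  have hsplit : ∫ τ in (0 : ℝ)..t, g τ = (∫ τ in (0 : ℝ)..s * t, g τ) + ∫ τ in s * t..t, g τ :=
    (intervalIntegral.integral_add_adjacent_intervals (hg.intervalIntegrable _ _)
      (hg.intervalIntegrable _ _)).symm
  rw [jeanjeanFn, jeanjeanFn, hsplit]
  linarith

lemma monotoneOn_Ioi_reflect_of_monotoneOn_Iio (hmono : MonotoneOn (fun t => g t / |t| ^ n) (Iio 0)) :
    MonotoneOn (fun t => -g (-t) / |t| ^ n) (Ioi 0) := by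
  intro a ha b hb hab
  have h := hmono (mem_Iio.2 (neg_lt_zero.2 hb)) (mem_Iio.2 (neg_lt_zero.2 ha)) (neg_le_neg hab)
  simp only [abs_neg] at h
  simp only [neg_div]
  exact neg_le_neg h

lemma jeanjeanFn_reflect (t : ℝ) : jeanjeanFn (fun τ => -g (-τ)) n t = jeanjeanFn g n (-t) := by
  simp only [jeanjeanFn, intervalIntegral.integral_neg, intervalIntegral.integral_comp_neg,
    neg_zero, intervalIntegral.integral_symm (-t) 0]
  ring

theorem jeanjeanFn_mul_le (hg : Continuous g)
    (hmono₁ : MonotoneOn (fun t => g t / |t| ^ n) (Ioi 0))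
    (hmono₂ : MonotoneOn (fun t => g t / |t| ^ n) (Iio 0)) {s : ℝ} (hs : s ∈ Icc 0 1) (t : ℝ) :
    jeanjeanFn g n (s * t) ≤ jeanjeanFn g n t := by
  rcases lt_trichotomy t 0 with ht | rfl | ht
  · have h := jeanjeanFn_mul_le_of_pos (by fun_prop) (monotoneOn_Ioi_reflect_of_monotoneOn_Iio hmono₂) hs
      (neg_pos.2 ht)
    rwa [jeanjeanFn_reflect, jeanjeanFn_reflect, neg_neg, ← mul_neg, neg_neg] at h
  · simp
  · exact jeanjeanFn_mul_le_of_pos hg hmono₁ hs ht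

end

/-- if `t ↦ g(t)/|t|³` is nondecreasing on `(0,∞)` and on `(-∞,0)`,
then `𝒢(st) ≤ 𝒢(t)` for all `s ∈ [0,1]`, `t ∈ ℝ`, where `𝒢(t) = g(t) t - 4 G(t)`. -/
theorem stmt_13 (g G : ℝ → ℝ) (hg : Continuous g)
    (hG : ∀ t, G t = ∫ τ in (0 : ℝ)..t, g τ)
    (hmono₁ : MonotoneOn (fun t => g t / |t| ^ 3) (Ioi (0 : ℝ)))
    (hmono₂ : MonotoneOn (fun t => g t / |t| ^ 3) (Iio (0 : ℝ))) :
    ∀ s ∈ Icc (0 : ℝ) 1, ∀ t : ℝ,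
      g (s * t) * (s * t) - 4 * G (s * t) ≤ g t * t - 4 * G t := by
  intro s hs t
  have h := jeanjeanFn_mul_le hg hmono₁ hmono₂ hs t
  simp only [jeanjeanFn, ← hG] at h
  norm_num at h
  linarith
end

section
/- Let G : ℝ → ℝ satisfy G(t) ≥ -Λ̃t⁴ for some Λ̃ > 0 and G(t)/t⁴ → +∞ as |t| → ∞, and let the functional Φ(u) = (1/2)‖u‖² + (1/4)P(u) − ∫_{ℝ³}G(u)dx with 0 ≤ P(u) ≤ 4a₁‖u‖⁴ be defined on a finite-dimensional subspace Y of H¹(ℝ³) (with equivalent norms and a.e.-convergent subsequences available). Then Φ(uₙ) → −∞ for any sequence uₙ ∈ Y with ‖uₙ‖ → ∞. -/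
/-!
The normalised vectors `u n / ‖u n‖` lie in the unit ball of the finite-dimensional space `Y`,
so along a subsequence they converge in `L⁴`, to some `z` of norm one, and then almost
everywhere along a further subsequence. On the set `{z ≠ 0}`, which has positive measure,
`|u n x| → ∞` and hence `(G (u n x) + Λ (u n x)⁴) / ‖u n‖⁴ → ∞`; these functions are
nonnegative, so Fatou's lemma gives `∫ G (u n) / ‖u n‖⁴ → ∞`. The remaining terms of `Φ` are
at most `(1/2 + a₁) ‖u n‖⁴`, so `Φ (u n) → -∞`. Every subsequence having a further subsequence
with this property, the whole sequence has it.
-/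

open MeasureTheory Filter Topology ENNReal

theorem tendsto_apply_mul_div_pow_atTop {ι : Type*} {l : Filter ι} {F : ℝ → ℝ} {n : ℕ}
    (hn : Even n) (hF : Tendsto (fun t => F t / t ^ n) (cocompact ℝ) atTop) {T W : ι → ℝ}
    {c : ℝ} (hc : c ≠ 0) (hT : Tendsto T l atTop) (hW : Tendsto W l (𝓝 c)) :
    Tendsto (fun i => F (T i * W i) / T i ^ n) l atTop := by
  have hTW : Tendsto (fun i => T i * W i) l (cocompact ℝ) := by
    rw [cocompact_eq_atBot_atTop, ← comap_abs_atTop, tendsto_comap_iff]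
    exact (hT.atTop_mul_pos (abs_pos.2 hc) hW.abs).congr' <|
      (hT.eventually_ge_atTop 0).mono fun i hi => by simp [abs_mul, abs_of_nonneg hi]
  refine ((hF.comp hTW).atTop_mul_pos (hn.pow_pos hc) (hW.pow n)).congr' ?_
  filter_upwards [hW.eventually_ne hc, hT.eventually_ne_atTop 0] with i hW0 hT0
  simp only [Function.comp_apply]
  field_simp
  ring

namespace MeasureTheory

variable {α : Type*} [MeasurableSpace α] {μ : Measure α}

theorem Lp.integrable_pow_four (f : Lp ℝ 4 μ) : Integrable (fun x => f x ^ 4) μ := by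
  have h := (Lp.memLp f).integrable_norm_rpow four_ne_zero ofNat_ne_top
  refine h.congr (.of_forall fun x => ?_)
  simp [Even.pow_abs (⟨2, rfl⟩ : Even 4)]

theorem Lp.integral_pow_four (f : Lp ℝ 4 μ) : ∫ x, f x ^ 4 ∂μ = ‖f‖ ^ 4 := by
  have hI : ∫ x, ‖f x‖ ^ (4 : ℝ≥0∞).toReal ∂μ = ∫ x, f x ^ 4 ∂μ :=
    integral_congr_ae (.of_forall fun x => by simp [Even.pow_abs (⟨2, rfl⟩ : Even 4)])
  have hnn : 0 ≤ ∫ x, f x ^ 4 ∂μ := integral_nonneg fun x => by positivity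
  rw [Lp.norm_def, (Lp.memLp f).eLpNorm_eq_integral_rpow_norm four_ne_zero ofNat_ne_top, hI,
    toReal_ofReal (by positivity), ← Real.rpow_natCast, ← Real.rpow_mul hnn]
  norm_num

theorem tendsto_integral_atTop_of_tendsto_atTop_on {ι : Type*} {l : Filter ι}
    [l.NeBot] [l.IsCountablyGenerated] {f : ι → α → ℝ} {A : Set α} (hA : MeasurableSet A)
    (hA0 : μ A ≠ 0)
    (hf0 : ∀ i, 0 ≤ᵐ[μ] f i) (hf : ∀ i, Integrable (f i) μ)
    (hlim : ∀ᵐ x ∂μ, x ∈ A → Tendsto (fun i => f i x) l atTop) :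
    Tendsto (fun i => ∫ x, f i x ∂μ) l atTop := by
  set q : ι → α → ℝ≥0∞ := fun i x => ENNReal.ofReal (f i x)
  have hq_top : ∫⁻ x, liminf (fun i => q i x) l ∂μ = ⊤ := by
    have hA_top : ∀ᵐ x ∂μ.restrict A, liminf (fun i => q i x) l = ⊤ :=
      (ae_restrict_iff' hA).2 <| hlim.mono fun x hx hxA =>
        (ENNReal.tendsto_ofReal_atTop.comp (hx hxA)).liminf_eq
    refine top_le_iff.1 <| le_trans ?_ (setLIntegral_le_lintegral A _)
    rw [lintegral_congr_ae hA_top, setLIntegral_const, ENNReal.top_mul hA0]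
  have hliminf : liminf (fun i => ∫⁻ x, q i x ∂μ) l = ⊤ :=
    top_le_iff.1 <| hq_top ▸ lintegral_liminf_le' fun i => (hf i).1.aemeasurable.ennreal_ofReal
  refine tendsto_atTop.2 fun M => ?_
  have hM : ENNReal.ofReal M < liminf (fun i => ∫⁻ x, q i x ∂μ) l := hliminf ▸ ofReal_lt_top
  filter_upwards [eventually_lt_of_lt_liminf hM] with i hi
  rw [integral_eq_lintegral_of_nonneg_ae (hf0 i) (hf i).1]
  exact (ofReal_le_iff_le_toReal (hf i).lintegral_lt_top.ne).1 hi.le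

theorem tendsto_integral_comp_div_norm_pow_four {G : ℝ → ℝ} {Λ : ℝ}
    (hlow : ∀ t, -Λ * t ^ 4 ≤ G t) (hsup : Tendsto (fun t => G t / t ^ 4) (cocompact ℝ) atTop)
    {v : ℕ → Lp ℝ 4 μ} (hv : Tendsto (fun i => ‖v i‖) atTop atTop) {z : Lp ℝ 4 μ} (hz : z ≠ 0)
    (hvz : Tendsto (fun i => ‖v i‖⁻¹ • v i) atTop (𝓝 z))
    (hint : ∀ i, Integrable (fun x => G (v i x)) μ) :
    Tendsto (fun i => (∫ x, G (v i x) ∂μ) / ‖v i‖ ^ 4) atTop atTop := by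
  refine tendsto_of_subseq_tendsto fun ns hns => ?_
  obtain ⟨ψ, hψ, hae⟩ :=
    (tendstoInMeasure_of_tendsto_Lp (hvz.comp hns)).exists_seq_tendsto_ae
  refine ⟨ψ, ?_⟩
  set V : ℕ → Lp ℝ 4 μ := fun i => v (ns (ψ i))
  have hV : Tendsto (fun i => ‖V i‖) atTop atTop :=
    hv.comp (hns.comp hψ.tendsto_atTop)
  have hF : Tendsto (fun t => (G t + Λ * t ^ 4) / t ^ 4) (cocompact ℝ) atTop := by
    refine (tendsto_atTop_add_const_right _ Λ hsup).congr' ?_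
    filter_upwards [isCompact_singleton.compl_mem_cocompact] with t (ht : t ≠ 0)
    field_simp
  set A : Set α := {x | z x ≠ 0}
  have hA : MeasurableSet A :=
    ((Lp.stronglyMeasurable z).measurable (measurableSet_singleton 0)).compl
  have hA0 : μ A ≠ 0 := fun h =>
    hz <| Lp.eq_zero_iff_ae_eq_zero.2 <| (ae_iff.2 h).mono fun x hx => hx
  have hlim : ∀ᵐ x ∂μ, x ∈ A →
      Tendsto (fun i => (G (V i x) + Λ * V i x ^ 4) / ‖V i‖ ^ 4) atTop atTop := by
    filter_upwards [hae, ae_all_iff.2 fun i => Lp.coeFn_smul ‖V i‖⁻¹ (V i)] with x hx hsmul hxA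
    refine (tendsto_apply_mul_div_pow_atTop ⟨2, rfl⟩ hF hxA hV hx).congr' ?_
    filter_upwards [hV.eventually_ne_atTop 0] with i hi
    rw [Function.comp_apply, hsmul i]
    simp [hi]
  have hFint : Tendsto (fun i => ∫ x, (G (V i x) + Λ * V i x ^ 4) / ‖V i‖ ^ 4 ∂μ) atTop atTop :=
    tendsto_integral_atTop_of_tendsto_atTop_on hA hA0
      (fun i => .of_forall fun x => div_nonneg (by linarith [hlow (V i x)]) (by positivity))
      (fun i => ((hint _).add ((Lp.integrable_pow_four _).const_mul Λ)).div_const _) hlim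
  refine (tendsto_atTop_add_const_right _ (-Λ) hFint).congr' ?_
  filter_upwards [hV.eventually_ne_atTop 0] with i hi
  rw [integral_div, integral_add (hint _) ((Lp.integrable_pow_four _).const_mul Λ),
    integral_const_mul, Lp.integral_pow_four]
  simp only [V] at hi ⊢
  field_simp
  ring

theorem tendsto_integral_comp_div_norm_pow_four_of_finiteDimensional {G : ℝ → ℝ} {Λ : ℝ}
    (hlow : ∀ t, -Λ * t ^ 4 ≤ G t) (hsup : Tendsto (fun t => G t / t ^ 4) (cocompact ℝ) atTop)
    {Y : Submodule ℝ (Lp ℝ 4 μ)} [FiniteDimensional ℝ Y] {u : ℕ → Y}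
    (hu : Tendsto (fun n => ‖u n‖) atTop atTop)
    (hint : ∀ n, Integrable (fun x => G ((u n : Lp ℝ 4 μ) x)) μ) :
    Tendsto (fun n => (∫ x, G ((u n : Lp ℝ 4 μ) x) ∂μ) / ‖u n‖ ^ 4) atTop atTop := by
  refine tendsto_of_subseq_tendsto fun ns hns => ?_
  set w : ℕ → Y := fun n => ‖u (ns n)‖⁻¹ • u (ns n)
  have hw : ∀ n, w n ∈ Metric.closedBall (0 : Y) 1 := fun n => by
    rw [mem_closedBall_zero_iff, norm_smul, norm_inv, norm_norm]
    exact inv_mul_le_one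
  obtain ⟨z, -, φ, hφ, hwz⟩ := (isCompact_closedBall (0 : Y) 1).tendsto_subseq hw
  have hz : ‖z‖ = 1 := by
    refine tendsto_nhds_unique hwz.norm (tendsto_const_nhds.congr' ?_)
    filter_upwards [((hu.comp hns).comp hφ.tendsto_atTop).eventually_ne_atTop 0] with n hn
    simp only [Function.comp_apply, w, norm_smul, norm_inv, norm_norm]
    exact (inv_mul_cancel₀ hn).symm
  have hz0 : (z : Lp ℝ 4 μ) ≠ 0 := norm_ne_zero_iff.1 (hz.trans_ne one_ne_zero)
  exact ⟨φ, tendsto_integral_comp_div_norm_pow_four hlow hsup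
    ((hu.comp hns).comp hφ.tendsto_atTop) hz0 ((Y.subtypeL.continuous.tendsto z).comp hwz)
    fun n => hint _⟩

end MeasureTheory

theorem stmt_14_general (G : ℝ → ℝ)
    (Λ : ℝ) (hlow : ∀ t : ℝ, G t ≥ -Λ * t ^ 4)
    (hsup : Tendsto (fun t => G t / t ^ 4) (cocompact ℝ) atTop)
    (a₁ : ℝ)
    (Y : Submodule ℝ (Lp ℝ 4 (volume : Measure (EuclideanSpace ℝ (Fin 3)))))
    [FiniteDimensional ℝ Y]
    (P : Y → ℝ) (hP : ∀ w, P w ≤ 4 * a₁ * ‖w‖ ^ 4)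
    (u : ℕ → Y) (hu : Tendsto (fun n => ‖u n‖) atTop atTop)
    (hint : ∀ n, Integrable
      (fun x => G ((u n : Lp ℝ 4 (volume : Measure (EuclideanSpace ℝ (Fin 3)))) x)) volume)
    (Φ : Y → ℝ)
    (hΦ : ∀ w : Y, Φ w = 1 / 2 * ‖w‖ ^ 2 + 1 / 4 * P w -
      ∫ x, G ((w : Lp ℝ 4 (volume : Measure (EuclideanSpace ℝ (Fin 3)))) x)) :
    Tendsto (fun n => Φ (u n)) atTop atBot := by
  set g : ℕ → ℝ := fun n =>
    (∫ x, G ((u n : Lp ℝ 4 (volume : Measure (EuclideanSpace ℝ (Fin 3)))) x)) / ‖u n‖ ^ 4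
  have hg : Tendsto g atTop atTop :=
    tendsto_integral_comp_div_norm_pow_four_of_finiteDimensional hlow hsup hu hint
  have hbound : ∀ᶠ n in atTop, Φ (u n) ≤ ‖u n‖ ^ 4 * (1 / 2 + a₁ - g n) := by
    filter_upwards [hu.eventually_ge_atTop 1] with n hn
    have hsq : ‖u n‖ ^ 2 ≤ ‖u n‖ ^ 4 := pow_le_pow_right₀ hn (by norm_num)
    have hI : ‖u n‖ ^ 4 * g n = _ :=
      mul_div_cancel₀ _ (pow_ne_zero 4 (zero_lt_one.trans_le hn).ne')
    rw [hΦ, mul_sub, ← hI]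
    linarith [hP (u n)]
  refine tendsto_atBot_mono' _ hbound <|
    ((tendsto_pow_atTop four_ne_zero).comp hu).atTop_mul_atBot₀ ?_
  exact tendsto_atBot_add_const_left _ _ (tendsto_neg_atTop_atBot.comp hg)

/-- anti-coercivity on finite-dimensional subspaces: with `G ≥ -Λ̃ t⁴`,
`G(t)/t⁴ → +∞` as `|t| → ∞`, `0 ≤ P(u) ≤ 4a₁‖u‖⁴`, the functional
`Φ(u) = ½‖u‖² + ¼P(u) - ∫G(u)` on a finite-dimensional subspace `Y` of `H¹(ℝ³)`
(modelled as a finite-dimensional subspace of `L⁴(ℝ³)` with an equivalent norm)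
satisfies `Φ(uₙ) → -∞` whenever `‖uₙ‖ → ∞`. -/
theorem stmt_14 (G : ℝ → ℝ) (hGc : Continuous G)
    (Λ : ℝ) (hΛ : 0 < Λ) (hlow : ∀ t : ℝ, G t ≥ -Λ * t ^ 4)
    (hsup : Tendsto (fun t => G t / t ^ 4) (cocompact ℝ) atTop)
    (a₁ : ℝ) (ha₁ : 0 < a₁)
    (Y : Submodule ℝ (Lp ℝ 4 (volume : Measure (EuclideanSpace ℝ (Fin 3)))))
    [FiniteDimensional ℝ Y]
    (P : Y → ℝ) (hP0 : ∀ w, 0 ≤ P w) (hP : ∀ w, P w ≤ 4 * a₁ * ‖w‖ ^ 4)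
    (u : ℕ → Y) (hu : Tendsto (fun n => ‖u n‖) atTop atTop)
    (hint : ∀ n, Integrable
      (fun x => G ((u n : Lp ℝ 4 (volume : Measure (EuclideanSpace ℝ (Fin 3)))) x)) volume)
    (Φ : Y → ℝ)
    (hΦ : ∀ w : Y, Φ w = 1 / 2 * ‖w‖ ^ 2 + 1 / 4 * P w -
      ∫ x, G ((w : Lp ℝ 4 (volume : Measure (EuclideanSpace ℝ (Fin 3)))) x)) :
    Tendsto (fun n => Φ (u n)) atTop atBot :=
  stmt_14_general G Λ hlow hsup a₁ Y P hP u hu hint Φ hΦ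
end

section
/- Suppose f : ℝ → ℝ is continuous with f(t)t ≥ −Λt⁴ for some Λ > 0 and f(t)t/t⁴ → +∞ as |t| → ∞. Let uₙ ∈ H¹(ℝ³) with ‖uₙ‖ → ∞ and vₙ = uₙ/‖uₙ‖ → v in L⁴(ℝ³) and a.e., with v ≠ 0 on a set of positive measure. Then ∫_{ℝ³} f(uₙ)uₙ / ‖uₙ‖⁴ dx → +∞. -/
/-!
Add `Λ vₙ⁴` to the integrand `f(uₙ)uₙ/ρₙ⁴` to make it nonnegative. Where `v ≠ 0` we have
`|uₙ| = ρₙ|vₙ| → ∞`, so `f(uₙ)uₙ/ρₙ⁴ = (f(uₙ)uₙ/uₙ⁴) vₙ⁴ → ∞`; as `{v ≠ 0}` has positive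
measure, Fatou's lemma makes the integrals of the shifted integrands diverge, while
`∫ vₙ⁴ → ∫ v⁴` by the `L⁴` convergence.
-/

open MeasureTheory Filter Topology ENNReal

section

variable {α E ι : Type*} [MeasurableSpace α] {μ : Measure α} [NormedAddCommGroup E]
  {l : Filter ι}

theorem tendsto_abs_atTop_of_tendsto_div {t ρ : ι → ℝ} {a : ℝ} (ha : a ≠ 0)
    (hρ : Tendsto ρ l atTop) (ht : Tendsto (fun i => t i / ρ i) l (𝓝 a)) :
    Tendsto (fun i => |t i|) l atTop := by
  refine (hρ.atTop_mul_pos (abs_pos.2 ha) ht.abs).congr' ?_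
  filter_upwards [hρ.eventually_gt_atTop 0] with i hi
  rw [abs_div, abs_of_pos hi, mul_div_cancel₀ _ hi.ne']

theorem tendsto_div_pow_atTop_of_tendsto_div {φ : ℝ → ℝ} {p : ℕ} (hp : Even p)
    (hφ : Tendsto (fun t => φ t / t ^ p) (cocompact ℝ) atTop) {t ρ : ι → ℝ}
    {a : ℝ} (ha : a ≠ 0) (hρ : Tendsto ρ l atTop) (ht : Tendsto (fun i => t i / ρ i) l (𝓝 a)) :
    Tendsto (fun i => φ (t i) / ρ i ^ p) l atTop := by
  have habs := tendsto_abs_atTop_of_tendsto_div ha hρ ht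
  have hcocompact : Tendsto t l (cocompact ℝ) := by
    rwa [cocompact_eq_atBot_atTop, ← comap_abs_atTop, tendsto_comap_iff]
  refine ((hφ.comp hcocompact).atTop_mul_pos (hp.pow_pos ha) (ht.pow p)).congr' ?_
  filter_upwards [habs.eventually_gt_atTop 0, hρ.eventually_gt_atTop 0] with i hti hρi
  have : t i ≠ 0 := abs_pos.1 hti
  simp only [Function.comp_apply, div_pow]
  field_simp

theorem tendsto_lintegral_nhds_top_of_ae_tendsto [l.NeBot] [l.IsCountablyGenerated]
    {F : ι → α → ℝ≥0∞} (hF : ∀ i, AEMeasurable (F i) μ) {s : Set α}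
    (hs : NullMeasurableSet s μ) (hμs : μ s ≠ 0) (h : ∀ᵐ x ∂μ, x ∈ s → Tendsto (F · x) l (𝓝 ∞)) :
    Tendsto (fun i => ∫⁻ x, F i x ∂μ) l (𝓝 ∞) := by
  have hlim : s.indicator (fun _ => ∞) ≤ᵐ[μ] fun x => liminf (F · x) l := by
    filter_upwards [h] with x hx
    by_cases hxs : x ∈ s
    · simp [hxs, (hx hxs).liminf_eq]
    · simp [hxs]
  refine tendsto_of_le_liminf_of_limsup_le ?_ le_top
  calc ∞ = ∫⁻ x, s.indicator (fun _ => ∞) x ∂μ := by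
        rw [lintegral_indicator_const₀ hs, top_mul hμs]
    _ ≤ ∫⁻ x, liminf (F · x) l ∂μ := lintegral_mono_ae hlim
    _ ≤ liminf (fun i => ∫⁻ x, F i x ∂μ) l := lintegral_liminf_le' hF

theorem tendsto_integral_atTop_of_ae_tendsto_atTop [l.NeBot] [l.IsCountablyGenerated]
    {F : ι → α → ℝ} (hF : ∀ i, Integrable (F i) μ) (hF₀ : ∀ i, 0 ≤ᵐ[μ] F i) {s : Set α}
    (hs : NullMeasurableSet s μ) (hμs : μ s ≠ 0)
    (h : ∀ᵐ x ∂μ, x ∈ s → Tendsto (F · x) l atTop) :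
    Tendsto (fun i => ∫ x, F i x ∂μ) l atTop := by
  rw [← ENNReal.tendsto_ofReal_nhds_top]
  simp_rw [ofReal_integral_eq_lintegral_ofReal (hF _) (hF₀ _)]
  refine tendsto_lintegral_nhds_top_of_ae_tendsto (fun i => (hF i).1.aemeasurable.ennreal_ofReal)
    hs hμs ?_
  filter_upwards [h] with x hx hxs using ENNReal.tendsto_ofReal_nhds_top.2 (hx hxs)

theorem tendsto_lpNorm_of_tendsto_eLpNorm_sub {p : ℝ≥0∞} (hp : 1 ≤ p) {g : ι → α → E}
    {G : α → E} (hg : ∀ i, MemLp (g i) p μ) (hG : MemLp G p μ)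
    (h : Tendsto (fun i => eLpNorm (g i - G) p μ) l (𝓝 0)) :
    Tendsto (fun i => lpNorm (g i) p μ) l (𝓝 (lpNorm G p μ)) := by
  have hsub : Tendsto (fun i => lpNorm (g i - G) p μ) l (𝓝 0) := by
    have := (ENNReal.tendsto_toReal zero_ne_top).comp h
    simpa only [Function.comp_def, toReal_eLpNorm ((hg _).sub hG).1, toReal_zero] using this
  rw [tendsto_iff_dist_tendsto_zero]
  refine squeeze_zero (fun _ => dist_nonneg) (fun i => ?_) hsub
  rw [Real.dist_eq, abs_sub_le_iff]
  constructor
  · linarith [lpNorm_le_lpNorm_add_lpNorm_sub' (f := g i) hG hp]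
  · linarith [lpNorm_le_lpNorm_add_lpNorm_sub (f := G) (hg i) hp]

theorem integral_norm_rpow_eq_lpNorm_rpow {p : ℝ≥0∞} (hp₀ : p ≠ 0) (hp_top : p ≠ ∞)
    {g : α → E} (hg : AEStronglyMeasurable g μ) :
    ∫ x, ‖g x‖ ^ p.toReal ∂μ = lpNorm g p μ ^ p.toReal := by
  rw [lpNorm_eq_integral_norm_rpow_toReal hp₀ hp_top hg, Real.rpow_inv_rpow
    (integral_nonneg fun _ => by positivity) (ENNReal.toReal_ne_zero.2 ⟨hp₀, hp_top⟩)]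

theorem tendsto_integral_norm_rpow_of_tendsto_eLpNorm_sub {p : ℝ≥0∞} (hp : 1 ≤ p)
    (hp_top : p ≠ ∞) {g : ι → α → E} {G : α → E} (hg : ∀ i, MemLp (g i) p μ) (hG : MemLp G p μ)
    (h : Tendsto (fun i => eLpNorm (g i - G) p μ) l (𝓝 0)) :
    Tendsto (fun i => ∫ x, ‖g i x‖ ^ p.toReal ∂μ) l (𝓝 (∫ x, ‖G x‖ ^ p.toReal ∂μ)) := by
  have hp₀ : p ≠ 0 := (zero_lt_one.trans_le hp).ne'
  simp only [integral_norm_rpow_eq_lpNorm_rpow hp₀ hp_top (hg _).1,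
    integral_norm_rpow_eq_lpNorm_rpow hp₀ hp_top hG.1]
  exact (tendsto_lpNorm_of_tendsto_eLpNorm_sub hp hg hG h).rpow_const (Or.inr toReal_nonneg)

end

theorem stmt_18_general (f : ℝ → ℝ)
    (Λ : ℝ) (hlow : ∀ t : ℝ, f t * t ≥ -Λ * t ^ 4)
    (hsup : Tendsto (fun t => f t * t / t ^ 4) (cocompact ℝ) atTop)
    (u : ℕ → EuclideanSpace ℝ (Fin 3) → ℝ)
    (ρ : ℕ → ℝ)
    (hρ : Tendsto ρ atTop atTop)
    (v : EuclideanSpace ℝ (Fin 3) → ℝ)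
    (hmem : ∀ n, MemLp (fun x => u n x / ρ n) 4
      (volume : Measure (EuclideanSpace ℝ (Fin 3))))
    (hmemlim : MemLp v 4 (volume : Measure (EuclideanSpace ℝ (Fin 3))))
    (hL4 : Tendsto (fun n => eLpNorm ((fun x => u n x / ρ n) - v) 4 volume)
      atTop (𝓝 0))
    (hae : ∀ᵐ x ∂(volume : Measure (EuclideanSpace ℝ (Fin 3))),
      Tendsto (fun n => u n x / ρ n) atTop (𝓝 (v x)))
    (hpos : 0 < volume {x | v x ≠ 0})
    (hint : ∀ n, Integrable (fun x => f (u n x) * u n x)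
      (volume : Measure (EuclideanSpace ℝ (Fin 3)))) :
    Tendsto (fun n => ∫ x, f (u n x) * u n x / ρ n ^ 4) atTop atTop := by
  have hnorm : ∀ a : ℝ, ‖a‖ ^ (4 : ℝ≥0∞).toReal = a ^ 4 := fun a => by
    rw [toReal_ofNat, Real.rpow_ofNat, Real.norm_eq_abs, Even.pow_abs ⟨2, rfl⟩]
  have hpow_int : ∀ n, Integrable (fun x => (u n x / ρ n) ^ 4) := fun n => by
    simpa only [hnorm] using (hmem n).integrable_norm_rpow (by norm_num) (by norm_num)
  have hpow_lim : Tendsto (fun n => ∫ x, (u n x / ρ n) ^ 4) atTop (𝓝 (∫ x, v x ^ 4)) := by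
    simpa only [hnorm] using
      tendsto_integral_norm_rpow_of_tendsto_eLpNorm_sub (by norm_num) (by norm_num) hmem hmemlim hL4
  have hF_int : ∀ n, Integrable
      (fun x => f (u n x) * u n x / ρ n ^ 4 + Λ * (u n x / ρ n) ^ 4) := fun n =>
    ((hint n).div_const _).add ((hpow_int n).const_mul Λ)
  have hF_nonneg : ∀ n x, 0 ≤ f (u n x) * u n x / ρ n ^ 4 + Λ * (u n x / ρ n) ^ 4 :=
    fun n x => by
      have := hlow (u n x)
      rw [div_pow, mul_div_assoc', ← add_div]
      exact div_nonneg (by linarith) (by positivity)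
  have hF_top : ∀ᵐ x, x ∈ {x | v x ≠ 0} →
      Tendsto (fun n => f (u n x) * u n x / ρ n ^ 4 + Λ * (u n x / ρ n) ^ 4) atTop atTop := by
    filter_upwards [hae] with x hx hvx
    exact (tendsto_div_pow_atTop_of_tendsto_div (φ := fun t => f t * t) ⟨2, rfl⟩ hsup hvx hρ
      hx).atTop_add ((hx.pow 4).const_mul Λ)
  have hF_lim := tendsto_integral_atTop_of_ae_tendsto_atTop hF_int
    (fun n => ae_of_all _ (hF_nonneg n))
    (hmemlim.1.aemeasurable.nullMeasurable (measurableSet_singleton 0).compl) hpos.ne' hF_top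
  refine (hF_lim.atTop_add (hpow_lim.const_mul (-Λ))).congr fun n => ?_
  rw [integral_add ((hint n).div_const _) ((hpow_int n).const_mul Λ), integral_const_mul]
  ring

/-- key step in the (C)* verification: with `f(t)t ≥ -Λt⁴` and
`f(t)t/t⁴ → +∞` as `|t| → ∞`, if `‖uₙ‖ = ρₙ → ∞` and the normalized sequence
`vₙ = uₙ/ρₙ` converges to `v` in `L⁴(ℝ³)` and a.e., with `{v ≠ 0}` of positive measure,
then `∫ f(uₙ)uₙ/ρₙ⁴ → +∞`. -/
theorem stmt_18 (f : ℝ → ℝ) (hf : Continuous f)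
    (Λ : ℝ) (hΛ : 0 < Λ) (hlow : ∀ t : ℝ, f t * t ≥ -Λ * t ^ 4)
    (hsup : Tendsto (fun t => f t * t / t ^ 4) (cocompact ℝ) atTop)
    (u : ℕ → EuclideanSpace ℝ (Fin 3) → ℝ)
    (ρ : ℕ → ℝ) (hρpos : ∀ n, 0 < ρ n)
    (hρ : Tendsto ρ atTop atTop)
    (v : EuclideanSpace ℝ (Fin 3) → ℝ)
    (hmem : ∀ n, MemLp (fun x => u n x / ρ n) 4
      (volume : Measure (EuclideanSpace ℝ (Fin 3))))
    (hmemlim : MemLp v 4 (volume : Measure (EuclideanSpace ℝ (Fin 3))))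
    (hL4 : Tendsto (fun n => eLpNorm ((fun x => u n x / ρ n) - v) 4 volume)
      atTop (𝓝 0))
    (hae : ∀ᵐ x ∂(volume : Measure (EuclideanSpace ℝ (Fin 3))),
      Tendsto (fun n => u n x / ρ n) atTop (𝓝 (v x)))
    (hpos : 0 < volume {x | v x ≠ 0})
    (hint : ∀ n, Integrable (fun x => f (u n x) * u n x)
      (volume : Measure (EuclideanSpace ℝ (Fin 3)))) :
    Tendsto (fun n => ∫ x, f (u n x) * u n x / ρ n ^ 4) atTop atTop :=
  stmt_18_general f Λ hlow hsup u ρ hρ v hmem hmemlim hL4 hae hpos hint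
end
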